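/- arXiv:1905.03000 — 3 statements merged into one kernel-verified Lean document; each statement's English description precedes it below -/
import Mathlib

section
/- For all t ∈ [0, 2π] with t ≠ π, |(t−π)² · e^{it} / (1+e^{it})²| ≤ π²/4. -/
/-!
Since `e^{iπ} = -1`, we have `1 + e^{it} = -(e^{i(t-π)} - 1)`, whose modulus is `2 |sin((t-π)/2)|`.
Jordan's inequality `|sin x| ≥ (2/π) |x|` for `|x| ≤ π/2` then bounds the denominator below by
`(4/π²) (t-π)²` on `[0, 2π]`, while the numerator has modulus exactly `(t-π)²`.
-/

open Real Complex

theorem norm_one_add_exp_I_mul_ofReal (x : ℝ) :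
    ‖1 + exp (I * x)‖ = 2 * |Real.sin ((x - π) / 2)| := by
  have hshift : 1 + exp (I * x) = -(exp (I * ((x - π : ℝ) : ℂ)) - 1) := by
    rw [ofReal_sub, mul_sub, Complex.exp_sub, mul_comm I (π : ℂ), exp_pi_mul_I]
    ring
  rw [hshift, norm_neg, norm_exp_I_mul_ofReal_sub_one, norm_mul, Real.norm_eq_abs,
    Real.norm_eq_abs, abs_two]

theorem two_div_pi_mul_abs_sub_pi_le_norm_one_add_exp {t : ℝ} (ht : t ∈ Set.Icc 0 (2 * π)) :
    2 / π * |t - π| ≤ ‖1 + exp (I * t)‖ := by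
  have hx : |(t - π) / 2| ≤ π / 2 := by
    rw [abs_le]
    constructor <;> linarith [ht.1, ht.2]
  calc 2 / π * |t - π| = 2 * (2 / π * |(t - π) / 2|) := by
        rw [abs_div, abs_two]; ring
    _ ≤ 2 * |Real.sin ((t - π) / 2)| := by gcongr; exact mul_abs_le_abs_sin hx
    _ = ‖1 + exp (I * t)‖ := (norm_one_add_exp_I_mul_ofReal t).symm

theorem stmt_6 : ∀ t ∈ Set.Icc (0 : ℝ) (2 * π), t ≠ π →
    ‖(((t : ℂ) - (π : ℝ)) ^ 2 * Complex.exp (Complex.I * t)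
        / (1 + Complex.exp (Complex.I * t)) ^ 2)‖ ≤ π ^ 2 / 4 := by
  intro t ht hne
  have hden := two_div_pi_mul_abs_sub_pi_le_norm_one_add_exp ht
  have hgap : 0 < |t - π| := abs_pos.2 (sub_ne_zero.2 hne)
  have hnum : ‖(t : ℂ) - (π : ℝ)‖ = |t - π| := by
    rw [← ofReal_sub, norm_real, Real.norm_eq_abs]
  have hexp : ‖exp (I * t)‖ = 1 := by
    rw [mul_comm, norm_exp_ofReal_mul_I]
  have hden_pos : 0 < ‖1 + exp (I * t)‖ := (mul_pos (by positivity) hgap).trans_le hden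
  rw [norm_div, norm_mul, norm_pow, norm_pow, hnum, hexp, mul_one,
    div_le_iff₀ (pow_pos hden_pos 2)]
  calc |t - π| ^ 2 = π ^ 2 / 4 * (2 / π * |t - π|) ^ 2 := by
        field_simp
        norm_num
    _ ≤ π ^ 2 / 4 * ‖1 + exp (I * t)‖ ^ 2 := by gcongr
end

section
/- For every odd natural number k, the Riemann zeta value at −k satisfies ζ(−k) = (1/i^{k−1}) · (1/(1 − 2^{k+1})) · (d/dz)^{k−1} [e^{iz}/(1+e^{iz})²] evaluated at z = 0. -/
/-!
Put `G w = (1 + exp w)⁻¹`. The integrand is `-G'` evaluated at `w = i z`, so its `(k-1)`-st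
derivative at `0` is `-i^(k-1) G^(k)(0)`. The Taylor series of `G` at `0` is the inverse of
`1 + exp X`, and `X / (exp X + 1) = B(X) - B(2X)` where `B(X) = X / (exp X - 1)` generates the
Bernoulli numbers. Hence `G^(n)(0) = B_(n+1) (1 - 2^(n+1)) / (n+1)`, while for odd `k`,
`ζ(-k) = -B_(k+1) / (k+1)`.
-/

open PowerSeries Finset Nat Topology
open scoped ContDiff

section Taylor

variable {𝕜 : Type*} [NontriviallyNormedField 𝕜]

noncomputable def taylorSeries (f : 𝕜 → 𝕜) (x : 𝕜) : 𝕜⟦X⟧ :=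
  PowerSeries.mk fun n => iteratedDeriv n f x / n !

theorem coeff_taylorSeries (f : 𝕜 → 𝕜) (x : 𝕜) (n : ℕ) :
    coeff n (taylorSeries f x) = iteratedDeriv n f x / n ! :=
  coeff_mk _ _

theorem Filter.EventuallyEq.taylorSeries_eq {f g : 𝕜 → 𝕜} {x : 𝕜} (h : f =ᶠ[𝓝 x] g) :
    taylorSeries f x = taylorSeries g x := by
  ext n
  simp only [coeff_taylorSeries, h.iteratedDeriv_eq n]

theorem taylorSeries_one (x : 𝕜) : taylorSeries (fun _ => 1) x = 1 := by
  ext (_ | n) <;> simp [coeff_taylorSeries, iteratedDeriv_const, coeff_one]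

theorem taylorSeries_mul [CharZero 𝕜] {f g : 𝕜 → 𝕜} {x : 𝕜} (hf : ContDiffAt 𝕜 ∞ f x)
    (hg : ContDiffAt 𝕜 ∞ g x) :
    taylorSeries (fun y => f y * g y) x = taylorSeries f x * taylorSeries g x := by
  ext n
  rw [coeff_mul, Nat.sum_antidiagonal_eq_sum_range_succ_mk, coeff_taylorSeries,
    iteratedDeriv_fun_mul (hf.of_le (mod_cast le_top)) (hg.of_le (mod_cast le_top)), sum_div]
  refine sum_congr rfl fun i hi => ?_
  have hin : i ≤ n := Nat.lt_succ_iff.mp (mem_range.mp hi)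
  have hn : (n ! : 𝕜) ≠ 0 := Nat.cast_ne_zero.mpr (factorial_ne_zero n)
  rw [coeff_taylorSeries, coeff_taylorSeries, Nat.cast_choose 𝕜 hin]
  field_simp

end Taylor

theorem taylorSeries_one_add_cexp :
    taylorSeries (fun w => 1 + Complex.exp w) 0 = 1 + exp ℂ := by
  ext (_ | n)
  · simp [coeff_taylorSeries]
  · simp [coeff_taylorSeries, coeff_exp, iteratedDeriv_const_add, coeff_one,
      iteratedDeriv_eq_iterate, Complex.iter_deriv_exp]

theorem bernoulliPowerSeries_sub_rescale_two_mul_exp_add_one (K : Type*) [Field K]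
    [CharZero K] :
    (bernoulliPowerSeries K - rescale 2 (bernoulliPowerSeries K)) * (exp K + 1) = X := by
  have hB := bernoulliPowerSeries_mul_exp_sub_one K
  have hB2 : rescale 2 (bernoulliPowerSeries K) * (exp K ^ 2 - 1) = 2 * X := by
    have := congrArg (rescale (2 : K)) hB
    rwa [map_mul, map_sub, map_one, rescale_X, ← Nat.cast_ofNat, ← exp_pow_eq_rescale_exp,
      Nat.cast_ofNat, map_ofNat C] at this
  have hne : exp K - 1 ≠ 0 := fun h => by
    simpa [coeff_exp] using congrArg (coeff 1) h
  apply mul_right_cancel₀ hne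
  linear_combination (exp K + 1) * hB - hB2

theorem taylorSeries_inv_one_add_cexp :
    X * taylorSeries (fun w => (1 + Complex.exp w)⁻¹) 0 =
      bernoulliPowerSeries ℂ - rescale 2 (bernoulliPowerSeries ℂ) := by
  have h0 : 1 + Complex.exp 0 ≠ 0 := by norm_num
  have hE : ContDiffAt ℂ ∞ (fun w => 1 + Complex.exp w) 0 :=
    contDiffAt_const.add Complex.contDiff_exp.contDiffAt
  have hinv : taylorSeries (fun w => (1 + Complex.exp w)⁻¹) 0 * (1 + exp ℂ) = 1 := by
    rw [← taylorSeries_one_add_cexp, ← taylorSeries_mul (hE.fun_inv h0) hE,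
      ← taylorSeries_one 0]
    refine Filter.EventuallyEq.taylorSeries_eq ?_
    filter_upwards [hE.continuousAt.eventually_ne h0] with w hw using inv_mul_cancel₀ hw
  have hne : exp ℂ + 1 ≠ 0 := fun h => by
    simpa [coeff_exp] using congrArg (coeff 1) h
  apply mul_right_cancel₀ hne
  rw [bernoulliPowerSeries_sub_rescale_two_mul_exp_add_one, mul_assoc, add_comm, hinv, mul_one]

theorem iteratedDeriv_inv_one_add_cexp_zero (n : ℕ) :
    iteratedDeriv n (fun w => (1 + Complex.exp w)⁻¹) 0 =
      bernoulli (n + 1) * (1 - 2 ^ (n + 1)) / (n + 1) := by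
  have h := congrArg (coeff (n + 1)) taylorSeries_inv_one_add_cexp
  rw [coeff_succ_X_mul, coeff_taylorSeries] at h
  simp only [bernoulliPowerSeries, map_sub, coeff_rescale, coeff_mk, eq_ratCast] at h
  have hn : (n ! : ℂ) ≠ 0 := Nat.cast_ne_zero.mpr (factorial_ne_zero n)
  rw [div_eq_iff hn] at h
  rw [h, factorial_succ]
  push_cast
  field_simp

theorem iteratedDeriv_cexp_div_one_add_cexp_sq_zero (n : ℕ) :
    iteratedDeriv n (fun w => Complex.exp w / (1 + Complex.exp w) ^ 2) 0 =
      -iteratedDeriv (n + 1) (fun w => (1 + Complex.exp w)⁻¹) 0 := by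
  have h0 : 1 + Complex.exp 0 ≠ 0 := by norm_num
  have hE : Continuous fun w => 1 + Complex.exp w := by fun_prop
  have hderiv : (fun w => Complex.exp w / (1 + Complex.exp w) ^ 2) =ᶠ[𝓝 0]
      fun w => -deriv (fun w => (1 + Complex.exp w)⁻¹) w := by
    filter_upwards [hE.continuousAt.eventually_ne h0] with w hw
    rw [(((Complex.hasDerivAt_exp w).const_add 1).fun_inv hw).deriv]
    ring
  rw [hderiv.iteratedDeriv_eq, iteratedDeriv_fun_neg, iteratedDeriv_succ']

theorem iteratedDeriv_comp_mul_ofReal {E : Type*} [NormedAddCommGroup E] [NormedSpace ℂ E]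
    [CompleteSpace E] {f : ℂ → E} {c : ℂ} {x : ℝ} (hf : AnalyticAt ℂ f (c * x)) (n : ℕ) :
    iteratedDeriv n (fun y : ℝ => f (c * y)) x = c ^ n • iteratedDeriv n f (c * x) := by
  induction n generalizing x with
  | zero => simp
  | succ n ih =>
    have hnear : ∀ᶠ y : ℝ in 𝓝 x, AnalyticAt ℂ f (c * y) :=
      ((continuous_const.mul Complex.continuous_ofReal).tendsto x).eventually
        hf.eventually_analyticAt
    have hF : AnalyticAt ℂ (iteratedDeriv n f) (c * x) := by
      rw [iteratedDeriv_eq_iterate]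
      exact hf.iterated_deriv n
    have hlin : HasDerivAt (fun y : ℝ => c * (y : ℂ)) c x := by
      simpa using (Complex.ofRealCLM.hasDerivAt (x := x)).const_mul c
    have hderiv : HasDerivAt (fun y : ℝ => iteratedDeriv n f (c * y))
        (c • iteratedDeriv (n + 1) f (c * x)) x := by
      rw [iteratedDeriv_succ]
      exact hF.differentiableAt.hasDerivAt.scomp x hlin
    rw [iteratedDeriv_succ, Filter.EventuallyEq.deriv_eq (hnear.mono fun y hy => ih hy),
      (hderiv.fun_const_smul (c ^ n)).deriv, smul_smul, pow_succ]

theorem stmt_15 (k : ℕ) (hk : Odd k) :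
    riemannZeta (-(k : ℂ)) =
      (1 / Complex.I ^ (k - 1)) * (1 / (1 - 2 ^ (k + 1))) *
        iteratedDeriv (k - 1) (fun z : ℝ => Complex.exp (Complex.I * z)
          / (1 + Complex.exp (Complex.I * z)) ^ 2) 0 := by
  have hg : AnalyticAt ℂ (fun w => Complex.exp w / (1 + Complex.exp w) ^ 2)
      (Complex.I * (0 : ℝ)) :=
    analyticAt_cexp.div ((analyticAt_const.add analyticAt_cexp).pow 2) (by norm_num)
  have hpow : (2 : ℂ) ^ (k + 1) ≠ 1 := by
    exact_mod_cast (Nat.one_lt_two_pow (succ_ne_zero k)).ne'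
  rw [iteratedDeriv_comp_mul_ofReal hg, Complex.ofReal_zero, mul_zero,
    iteratedDeriv_cexp_div_one_add_cexp_sq_zero, Nat.sub_add_cancel hk.pos,
    iteratedDeriv_inv_one_add_cexp_zero, riemannZeta_neg_nat_eq_bernoulli, hk.neg_one_pow,
    smul_eq_mul]
  field_simp [sub_ne_zero.mpr hpow.symm]
end

section
/- Let T be a 2π-periodic distribution on ℝ and suppose there exist complex numbers α ≠ 1 and β ≠ 1 with α ≠ β such that both limits lim_{m→∞} ⟨T − α·H₂T, φₘ⟩ and lim_{m→∞} ⟨T − β·H₂T, φₘ⟩ exist for every approximate identity (φₘ). Then the limit lim_{m→∞} ⟨T, φₘ⟩ exists for every approximate identity. -/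
open Filter MeasureTheory Topology Real

/-- A symmetric positive mollifier: smooth, compactly supported, even,
nonnegative, with integral 1. -/
structure IsMollifier (φ : ℝ → ℝ) : Prop where
  smooth : ContDiff ℝ (⊤ : ℕ∞) φ
  compact_supp : HasCompactSupport φ
  even : ∀ t, φ (-t) = φ t
  nonneg : ∀ t, 0 ≤ φ t
  integral_one : ∫ t, φ t = 1

/-- Homothetic dilation: `⟨H₂ T, φ⟩ = (1/2) ⟨T, φ(·/2)⟩`. -/
noncomputable def homTwo (T : (ℝ → ℝ) → ℂ) : (ℝ → ℝ) → ℂ :=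
  fun φ => (1 / 2 : ℂ) * T (fun t => φ (t / 2))

theorem stmt_18 (T : (ℝ → ℝ) → ℂ)
    (hper : ∀ φ : ℝ → ℝ, T (fun t => φ (t + 2 * π)) = T φ)
    (α β : ℂ) (hα : α ≠ 1) (hβ : β ≠ 1) (hαβ : α ≠ β)
    (hA : ∀ φ : ℝ → ℝ, IsMollifier φ → ∃ L : ℂ,
      Tendsto (fun m : ℕ => T (fun t => m * φ (m * t))
        - α * homTwo T (fun t => m * φ (m * t))) atTop (nhds L))
    (hB : ∀ φ : ℝ → ℝ, IsMollifier φ → ∃ L : ℂ,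
      Tendsto (fun m : ℕ => T (fun t => m * φ (m * t))
        - β * homTwo T (fun t => m * φ (m * t))) atTop (nhds L)) :
    ∀ φ : ℝ → ℝ, IsMollifier φ → ∃ L : ℂ,
      Tendsto (fun m : ℕ => T (fun t => m * φ (m * t))) atTop (nhds L) := by
  intro φ hφ
  obtain ⟨L1, h1⟩ := hA φ hφ
  obtain ⟨L2, h2⟩ := hB φ hφ
  set f : ℕ → ℂ := fun m => T (fun t => m * φ (m * t)) with hf
  set g : ℕ → ℂ := fun m => homTwo T (fun t => m * φ (m * t)) with hg
  have hd : Tendsto (fun m => (α - β) * g m) atTop (nhds (L2 - L1)) := by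
    have := h2.sub h1
    convert this using 2 with m
    ring
  have hne : α - β ≠ 0 := sub_ne_zero.mpr hαβ
  have hgt : Tendsto g atTop (nhds ((α - β)⁻¹ * (L2 - L1))) := by
    have := hd.const_mul ((α - β)⁻¹)
    convert this using 2 with m
    field_simp
  refine ⟨L1 + α * ((α - β)⁻¹ * (L2 - L1)), ?_⟩
  have := h1.add (hgt.const_mul α)
  convert this using 2 with m
  ring
end
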